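/- Let (H, ⇀, ↼) be a matched pair of actions on a Hopf algebra H with braiding operator r(x ⊗ y) = (x₁ ⇀ y₁) ⊗ (x₂ ↼ y₂). Then for all x, y ∈ H: r(S(x₁) ⊗ (x₂ ⇀ y)) = y₁ ⊗ S(x ↼ y₂) and r((x ↼ y₁) ⊗ S(y₂)) = S(x₁ ⇀ y) ⊗ x₂. -/

import Mathlib

open TensorProduct Coalgebra HopfAlgebra LinearMap

noncomputable section

universe uR uA

/-- The pre-2025 `Coalgebra.Repr`: a representation of `comul a` as a finite sum of pure
tensors, with the index type bundled as a field (Mathlib has since made it a parameter). -/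
structure CoalgRepr (R : Type uR) {A : Type uA}
    [CommSemiring R] [AddCommMonoid A] [Module R A] [CoalgebraStruct R A] (a : A) where
  {ι : Type uA}
  (index : Finset ι)
  (left : ι → A)
  (right : ι → A)
  (eq : ∑ i ∈ index, left i ⊗ₜ[R] right i = CoalgebraStruct.comul a)

variable (k H : Type*) [CommRing k] [Ring H] [HopfAlgebra k H]

/-- `f` is a left `H`-module coalgebra action of the Hopf algebra `H` on itself. -/
structure IsLeftModCoalgAction (f : H ⊗[k] H →ₗ[k] H) : Prop where
  one_act : ∀ a : H, f (1 ⊗ₜ a) = a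
  mul_act : ∀ x y a : H, f ((x * y) ⊗ₜ a) = f (x ⊗ₜ f (y ⊗ₜ a))
  counit_act : ∀ x a : H, counit (R := k) (f (x ⊗ₜ a)) = counit (R := k) x * counit (R := k) a
  comul_act : ∀ (x a : H) (rx : CoalgRepr k x) (ra : CoalgRepr k a),
      comul (R := k) (f (x ⊗ₜ a)) =
        ∑ i ∈ rx.index, ∑ j ∈ ra.index,
          f (rx.left i ⊗ₜ ra.left j) ⊗ₜ[k] f (rx.right i ⊗ₜ ra.right j)

/-- `g` is a right `H`-module coalgebra action of the Hopf algebra `H` on itself. -/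
structure IsRightModCoalgAction (g : H ⊗[k] H →ₗ[k] H) : Prop where
  act_one : ∀ x : H, g (x ⊗ₜ 1) = x
  act_mul : ∀ x a b : H, g (x ⊗ₜ (a * b)) = g (g (x ⊗ₜ a) ⊗ₜ b)
  counit_act : ∀ x a : H, counit (R := k) (g (x ⊗ₜ a)) = counit (R := k) x * counit (R := k) a
  comul_act : ∀ (x a : H) (rx : CoalgRepr k x) (ra : CoalgRepr k a),
      comul (R := k) (g (x ⊗ₜ a)) =
        ∑ i ∈ rx.index, ∑ j ∈ ra.index,
          g (rx.left i ⊗ₜ ra.left j) ⊗ₜ[k] g (rx.right i ⊗ₜ ra.right j)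

/-- `(H, f, g)` (written `(H, ⇀, ↼)`) is a matched pair of actions on the Hopf algebra `H`:
`f` is a left module coalgebra action, `g` a right module coalgebra action, satisfying the
matched pair conditions (MP1)–(MP5) and the extra condition `xy = (x₁ ⇀ y₁)(x₂ ↼ y₂)`. -/
structure IsMatchedPairOfActions (f g : H ⊗[k] H →ₗ[k] H) : Prop where
  left_action : IsLeftModCoalgAction k H f
  right_action : IsRightModCoalgAction k H g
  mp1 : ∀ (x a b : H) (rx : CoalgRepr k x) (ra : CoalgRepr k a),
      f (x ⊗ₜ (a * b)) =
        ∑ i ∈ rx.index, ∑ j ∈ ra.index,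
          f (rx.left i ⊗ₜ ra.left j) * f (g (rx.right i ⊗ₜ ra.right j) ⊗ₜ b)
  mp2 : ∀ x : H, f (x ⊗ₜ 1) = counit (R := k) x • (1 : H)
  mp3 : ∀ (x y a : H) (ry : CoalgRepr k y) (ra : CoalgRepr k a),
      g ((x * y) ⊗ₜ a) =
        ∑ i ∈ ry.index, ∑ j ∈ ra.index,
          g (x ⊗ₜ f (ry.left i ⊗ₜ ra.left j)) * g (ry.right i ⊗ₜ ra.right j)
  mp4 : ∀ a : H, g ((1 : H) ⊗ₜ a) = counit (R := k) a • (1 : H)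
  mp5 : ∀ (x a : H) (rx : CoalgRepr k x) (ra : CoalgRepr k a),
      (∑ i ∈ rx.index, ∑ j ∈ ra.index,
        f (rx.left i ⊗ₜ ra.left j) ⊗ₜ[k] g (rx.right i ⊗ₜ ra.right j)) =
      ∑ i ∈ rx.index, ∑ j ∈ ra.index,
        f (rx.right i ⊗ₜ ra.right j) ⊗ₜ[k] g (rx.left i ⊗ₜ ra.left j)
  mp_mul : ∀ (x y : H) (rx : CoalgRepr k x) (ry : CoalgRepr k y),
      x * y = ∑ i ∈ rx.index, ∑ j ∈ ry.index,
        f (rx.left i ⊗ₜ ry.left j) * g (rx.right i ⊗ₜ ry.right j)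

/-- The braiding operator `r(x ⊗ y) = (x₁ ⇀ y₁) ⊗ (x₂ ↼ y₂)` associated to the pair `(f, g)`. -/
def braidOp (f g : H ⊗[k] H →ₗ[k] H) : H ⊗[k] H →ₗ[k] H ⊗[k] H :=
  TensorProduct.map f g ∘ₗ (tensorTensorTensorComm k H H H H).toLinearMap
    ∘ₗ TensorProduct.map (comul (R := k)) (comul (R := k))


namespace CoalgRepr

variable {R : Type*} {A : Type*} [CommSemiring R] [AddCommMonoid A] [Module R A]
  [CoalgebraStruct R A] {a : A}

/-- Conversion to Mathlib's representation. -/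
abbrev toRepr (r : CoalgRepr R a) : Coalgebra.Repr R a r.ι where
  index := r.index
  left := r.left
  right := r.right
  eq := r.eq

@[simp] lemma toRepr_index (r : CoalgRepr R a) : r.toRepr.index = r.index := rfl
@[simp] lemma toRepr_left (r : CoalgRepr R a) : r.toRepr.left = r.left := rfl
@[simp] lemma toRepr_right (r : CoalgRepr R a) : r.toRepr.right = r.right := rfl

end CoalgRepr

/-- The arbitrary representation, bundled. -/
def cR (R : Type*) {A : Type*} [CommSemiring R] [AddCommMonoid A] [Module R A]
    [CoalgebraStruct R A] (a : A) : CoalgRepr R a where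
  index := (ℛ R a).index
  left := (ℛ R a).left
  right := (ℛ R a).right
  eq := (ℛ R a).eq

section Conv

variable {R C A M : Type*} [CommSemiring R] [AddCommMonoid C] [Module R C] [Coalgebra R C]
  [Semiring A] [Algebra R A] [AddCommMonoid M] [Module R M]

/-- The unit of the convolution algebra. -/
def cunit : C →ₗ[R] A := Algebra.linearMap R A ∘ₗ counit

lemma cunit_apply (c : C) : (cunit (R := R) (A := A)) c = algebraMap R A (counit (R := R) c) := rfl

/-- Convolution product. -/
def conv (φ ψ : C →ₗ[R] A) : C →ₗ[R] A := mul' R A ∘ₗ map φ ψ ∘ₗ comul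

lemma conv_apply (φ ψ : C →ₗ[R] A) (c : C) (rc : CoalgRepr R c) :
    conv φ ψ c = ∑ i ∈ rc.index, φ (rc.left i) * ψ (rc.right i) := by
  simp only [conv, comp_apply, ← rc.eq, map_sum, map_tmul, mul'_apply]

lemma sum_counit_smul (c : C) (rc : CoalgRepr R c) :
    ∑ i ∈ rc.index, counit (R := R) (rc.left i) • rc.right i = c := by
  have h := congrArg (TensorProduct.lid R C) (Coalgebra.sum_counit_tmul_eq rc.toRepr)
  simp only [map_sum, lid_tmul, one_smul] at h
  exact h

lemma sum_smul_counit (c : C) (rc : CoalgRepr R c) :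
    ∑ i ∈ rc.index, counit (R := R) (rc.right i) • rc.left i = c := by
  have h := congrArg (TensorProduct.rid R C) (Coalgebra.sum_tmul_counit_eq rc.toRepr)
  simp only [map_sum, rid_tmul, one_smul] at h
  exact h

lemma three_leg (L : C ⊗[R] (C ⊗[R] C) →ₗ[R] M) (c : C) (rc : CoalgRepr R c)
    (t : (i : rc.ι) → CoalgRepr R (rc.left i))
    (s : (i : rc.ι) → CoalgRepr R (rc.right i)) :
    ∑ i ∈ rc.index, ∑ p ∈ (t i).index,
        L ((t i).left p ⊗ₜ ((t i).right p ⊗ₜ rc.right i)) =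
      ∑ i ∈ rc.index, ∑ p ∈ (s i).index,
        L (rc.left i ⊗ₜ ((s i).left p ⊗ₜ (s i).right p)) := by
  have h := Coalgebra.sum_tmul_tmul_eq rc.toRepr (fun i => (t i).toRepr) (fun i => (s i).toRepr)
  apply_fun L at h
  simpa [map_sum] using h

lemma conv_assoc (φ ψ χ : C →ₗ[R] A) : conv (conv φ ψ) χ = conv φ (conv ψ χ) := by
  ext c
  set rc := cR R c
  set t : (i : rc.ι) → CoalgRepr R (rc.left i) := fun i => cR R _
  set s : (i : rc.ι) → CoalgRepr R (rc.right i) := fun i => cR R _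
  rw [conv_apply _ _ _ rc, conv_apply _ _ _ rc]
  have h := three_leg (R := R)
    (mul' R A ∘ₗ map φ (mul' R A ∘ₗ map ψ χ)) c rc t s
  simp only [comp_apply, map_tmul, mul'_apply] at h
  calc ∑ i ∈ rc.index, conv φ ψ (rc.left i) * χ (rc.right i)
      = ∑ i ∈ rc.index, ∑ p ∈ (t i).index,
          φ ((t i).left p) * (ψ ((t i).right p) * χ (rc.right i)) := by
        refine Finset.sum_congr rfl fun i _ => ?_
        rw [conv_apply _ _ _ (t i), Finset.sum_mul]
        exact Finset.sum_congr rfl fun p _ => (mul_assoc _ _ _)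
    _ = ∑ i ∈ rc.index, ∑ p ∈ (s i).index,
          φ (rc.left i) * (ψ ((s i).left p) * χ ((s i).right p)) := h
    _ = ∑ i ∈ rc.index, φ (rc.left i) * conv ψ χ (rc.right i) := by
        refine Finset.sum_congr rfl fun i _ => ?_
        rw [conv_apply _ _ _ (s i), Finset.mul_sum]

lemma conv_cunit_left (φ : C →ₗ[R] A) : conv cunit φ = φ := by
  ext c
  rw [conv_apply _ _ _ (cR R c)]
  simp_rw [cunit_apply, ← Algebra.smul_def, ← map_smul, ← map_sum,
    sum_counit_smul c (cR R c)]

lemma conv_cunit_right (φ : C →ₗ[R] A) : conv φ cunit = φ := by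
  ext c
  rw [conv_apply _ _ _ (cR R c)]
  simp_rw [cunit_apply, ← Algebra.commutes, ← Algebra.smul_def, ← map_smul, ← map_sum,
    sum_smul_counit c (cR R c)]

lemma conv_cancel (φ ψ χ : C →ₗ[R] A) (h1 : conv φ ψ = cunit) (h2 : conv ψ χ = cunit) :
    φ = χ := by
  have : conv φ (conv ψ χ) = conv (conv φ ψ) χ := (conv_assoc φ ψ χ).symm
  rw [h1, h2, conv_cunit_right, conv_cunit_left] at this
  exact this

end Conv


section FinRepr

universe w

variable {R : Type*} {A : Type w} [CommSemiring R] [AddCommMonoid A] [Module R A] [CoalgebraStruct R A]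

/-- Reindex a representation by `ULift (Fin n)`, placing its index type in any universe. -/
noncomputable def finRepr {a : A} (r : CoalgRepr R a) : CoalgRepr R a where
  ι := ULift.{w} (Fin r.index.card)
  index := Finset.univ
  left := fun i => r.left (r.index.equivFin.symm i.down)
  right := fun i => r.right (r.index.equivFin.symm i.down)
  eq := by
    rw [← r.eq]
    calc ∑ i : ULift.{w} (Fin r.index.card),
          (r.left (r.index.equivFin.symm i.down) ⊗ₜ[R] r.right (r.index.equivFin.symm i.down))
        = ∑ j : Fin r.index.card,
            (r.left (r.index.equivFin.symm j) ⊗ₜ[R] r.right (r.index.equivFin.symm j)) :=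
          Equiv.ulift.symm.sum_comp _ |>.symm
      _ = ∑ x : r.index, (r.left x ⊗ₜ[R] r.right x) :=
          r.index.equivFin.symm.sum_comp (fun x : r.index => r.left x ⊗ₜ[R] r.right x)
      _ = ∑ i ∈ r.index, (r.left i ⊗ₜ[R] r.right i) :=
          Finset.sum_coe_sort r.index (fun i => r.left i ⊗ₜ[R] r.right i)

end FinRepr


section AntipodeConv

universe v

variable {R : Type*} {C A : Type v} [CommSemiring R] [AddCommMonoid C] [Module R C] [Coalgebra R C]
  [Semiring A] [HopfAlgebra R A]

/-- A coalgebra-morphism representation transport. -/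
def reprMap (φ : C →ₗ[R] A) (hΔ : comul ∘ₗ φ = TensorProduct.map φ φ ∘ₗ comul)
    (c : C) (rc : CoalgRepr R c) : CoalgRepr R (φ c) where
  ι := rc.ι
  index := rc.index
  left := φ ∘ rc.left
  right := φ ∘ rc.right
  eq := by
    rw [show CoalgebraStruct.comul (φ c) = TensorProduct.map φ φ (comul c) from
      LinearMap.congr_fun hΔ c, ← rc.eq, map_sum]
    simp [TensorProduct.map_tmul]

lemma conv_antipode_comp_right (φ : C →ₗ[R] A)
    (hΔ : comul ∘ₗ φ = TensorProduct.map φ φ ∘ₗ comul) (hε : counit ∘ₗ φ = counit (R := R) (A := C)) :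
    conv φ (antipode (R := R) ∘ₗ φ) = cunit := by
  ext c
  rw [conv_apply _ _ _ (cR R c), cunit_apply]
  have h := sum_mul_antipode_eq_algebraMap_counit (reprMap φ hΔ c (cR R c)).toRepr
  simp only [reprMap, Function.comp] at h
  simp only [LinearMap.comp_apply]
  rw [h]
  have := LinearMap.congr_fun hε c
  simp only [LinearMap.comp_apply] at this
  rw [this]

lemma conv_antipode_comp_left (φ : C →ₗ[R] A)
    (hΔ : comul ∘ₗ φ = TensorProduct.map φ φ ∘ₗ comul) (hε : counit ∘ₗ φ = counit (R := R) (A := C)) :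
    conv (antipode (R := R) ∘ₗ φ) φ = cunit := by
  ext c
  rw [conv_apply _ _ _ (cR R c), cunit_apply]
  have h := sum_antipode_mul_eq_algebraMap_counit (reprMap φ hΔ c (cR R c)).toRepr
  simp only [reprMap, Function.comp] at h
  simp only [LinearMap.comp_apply]
  rw [h]
  have := LinearMap.congr_fun hε c
  simp only [LinearMap.comp_apply] at this
  rw [this]

end AntipodeConv


section ComulAntipode

variable {k H : Type*} [CommRing k] [Ring H] [HopfAlgebra k H]

lemma conv_comul_comul_antipode :
    conv (comul (R := k) (A := H)) (comul ∘ₗ (antipode k)) = cunit := by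
  ext a
  rw [conv_apply _ _ _ (cR k a), cunit_apply]
  simp only [LinearMap.comp_apply]
  calc ∑ i ∈ (cR k a).index, comul ((cR k a).left i) * comul (antipode (R := k) ((cR k a).right i))
      = comul (R := k) (∑ i ∈ (cR k a).index, (cR k a).left i * antipode (R := k) ((cR k a).right i)) := by
        rw [map_sum]
        exact Finset.sum_congr rfl fun i _ => (Bialgebra.comul_mul _ _).symm
    _ = algebraMap k (H ⊗[k] H) (counit (R := k) a) := by
        rw [sum_mul_antipode_eq_algebraMap_counit (cR k a).toRepr, Bialgebra.comul_algebraMap]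

lemma conv_comul_antipode_comul :
    conv (comul (R := k) (A := H) ∘ₗ (antipode k)) comul = cunit := by
  ext a
  rw [conv_apply _ _ _ (cR k a), cunit_apply]
  simp only [LinearMap.comp_apply]
  calc ∑ i ∈ (cR k a).index, comul (antipode (R := k) ((cR k a).left i)) * comul ((cR k a).right i)
      = comul (R := k) (∑ i ∈ (cR k a).index, antipode (R := k) ((cR k a).left i) * (cR k a).right i) := by
        rw [map_sum]
        exact Finset.sum_congr rfl fun i _ => (Bialgebra.comul_mul _ _).symm
    _ = algebraMap k (H ⊗[k] H) (counit (R := k) a) := by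
        rw [sum_antipode_mul_eq_algebraMap_counit (cR k a).toRepr, Bialgebra.comul_algebraMap]

lemma conv_nu_comul :
    conv ((TensorProduct.comm k H H).toLinearMap ∘ₗ map (antipode k) (antipode k) ∘ₗ comul)
      (comul (R := k) (A := H)) = cunit := by
  ext a
  set r := cR k a with hr
  set t : (i : r.ι) → CoalgRepr k (r.left i) := fun i => cR k _ with ht
  set s : (i : r.ι) → CoalgRepr k (r.right i) := fun i => cR k _ with hs
  rw [conv_apply _ _ _ r, cunit_apply]
  set L : H ⊗[k] (H ⊗[k] H) →ₗ[k] H ⊗[k] H :=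
    mul' k (H ⊗[k] H) ∘ₗ
      map ((TensorProduct.comm k H H).toLinearMap ∘ₗ map (antipode k) (antipode k)) comul ∘ₗ
      (TensorProduct.assoc k H H H).symm.toLinearMap with hL
  have hLapp : ∀ u v w : H, L (u ⊗ₜ (v ⊗ₜ w)) =
      (antipode (R := k) v ⊗ₜ antipode (R := k) u) * comul (R := k) w := by
    intro u v w
    simp [hL, mul'_apply]
  calc ∑ i ∈ r.index,
        ((TensorProduct.comm k H H).toLinearMap ∘ₗ map (antipode k) (antipode k) ∘ₗ comul) (r.left i) *
          comul (R := k) (r.right i)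
      = ∑ i ∈ r.index, ∑ p ∈ (t i).index,
          L ((t i).left p ⊗ₜ ((t i).right p ⊗ₜ r.right i)) := by
        refine Finset.sum_congr rfl fun i _ => ?_
        simp only [LinearMap.comp_apply, ← (t i).eq, map_sum, map_tmul, LinearEquiv.coe_coe,
          comm_tmul, hLapp, Finset.sum_mul]
    _ = ∑ i ∈ r.index, ∑ p ∈ (s i).index,
          L (r.left i ⊗ₜ ((s i).left p ⊗ₜ (s i).right p)) := three_leg L a r t s
    _ = ∑ i ∈ r.index, (1 : H) ⊗ₜ[k] (antipode (R := k) (r.left i) * r.right i) := by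
        refine Finset.sum_congr rfl fun i _ => ?_
        -- inner collapse over p
        set c := r.left i with hc
        set L2 : H ⊗[k] (H ⊗[k] H) →ₗ[k] H ⊗[k] H :=
          map (mul' k H ∘ₗ map (antipode k) LinearMap.id) (mulLeft k (antipode (R := k) c)) ∘ₗ
            (TensorProduct.assoc k H H H).symm.toLinearMap with hL2
        have hL2app : ∀ u v w : H, L2 (u ⊗ₜ (v ⊗ₜ w)) =
            (antipode (R := k) u * v) ⊗ₜ (antipode (R := k) c * w) := by
          intro u v w
          simp [hL2, mul'_apply]
        have step1 : ∀ p ∈ (s i).index, L (r.left i ⊗ₜ ((s i).left p ⊗ₜ (s i).right p)) =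
            ∑ q ∈ (cR k ((s i).right p)).index,
              L2 ((s i).left p ⊗ₜ ((cR k ((s i).right p)).left q ⊗ₜ (cR k ((s i).right p)).right q)) := by
          intro p _
          rw [hLapp]
          rw [← (cR k ((s i).right p)).eq]
          rw [Finset.mul_sum]
          refine Finset.sum_congr rfl fun q _ => ?_
          rw [hL2app, Algebra.TensorProduct.tmul_mul_tmul]
        rw [Finset.sum_congr rfl step1]
        rw [← three_leg L2 (r.right i) (s i) (fun p => cR k _) (fun p => cR k _)]
        have step2 : ∀ p ∈ (s i).index, ∑ q ∈ (cR k ((s i).left p)).index,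
            L2 ((cR k ((s i).left p)).left q ⊗ₜ ((cR k ((s i).left p)).right q ⊗ₜ (s i).right p)) =
            counit (R := k) ((s i).left p) • ((1 : H) ⊗ₜ[k] (antipode (R := k) c * (s i).right p)) := by
          intro p _
          simp only [hL2app]
          rw [← TensorProduct.sum_tmul, sum_antipode_mul_eq_smul (cR k ((s i).left p)).toRepr,
            TensorProduct.smul_tmul']
        rw [Finset.sum_congr rfl step2]
        have step3 : ∀ p ∈ (s i).index,
            counit (R := k) ((s i).left p) • ((1 : H) ⊗ₜ[k] (antipode (R := k) c * (s i).right p)) =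
            (1 : H) ⊗ₜ[k] (antipode (R := k) c * (counit (R := k) ((s i).left p) • (s i).right p)) := by
          intro p _
          rw [mul_smul_comm, tmul_smul]
        rw [Finset.sum_congr rfl step3, ← TensorProduct.tmul_sum, ← Finset.mul_sum,
          sum_counit_smul _ (s i)]
    _ = algebraMap k (H ⊗[k] H) (counit (R := k) a) := by
        rw [← TensorProduct.tmul_sum, sum_antipode_mul_eq_smul (cR k a).toRepr,
          Algebra.algebraMap_eq_smul_one, tmul_smul, Algebra.TensorProduct.one_def]

lemma comul_antipode :
    comul (R := k) (A := H) ∘ₗ (antipode k) =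
      (TensorProduct.comm k H H).toLinearMap ∘ₗ map (antipode k) (antipode k) ∘ₗ comul :=
  (conv_cancel _ _ _ conv_nu_comul conv_comul_comul_antipode).symm

end ComulAntipode


section TensorCoalg

lemma sum4_swap {α β γ δ M : Type*} [AddCommMonoid M] (A : Finset α) (B : α → Finset β)
    (C : Finset γ) (D : γ → Finset δ) (F : α → β → γ → δ → M) :
    ∑ i ∈ A, ∑ p ∈ B i, ∑ j ∈ C, ∑ q ∈ D j, F i p j q =
      ∑ j ∈ C, ∑ q ∈ D j, ∑ i ∈ A, ∑ p ∈ B i, F i p j q := by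
  calc ∑ i ∈ A, ∑ p ∈ B i, ∑ j ∈ C, ∑ q ∈ D j, F i p j q
      = ∑ i ∈ A, ∑ j ∈ C, ∑ p ∈ B i, ∑ q ∈ D j, F i p j q :=
        Finset.sum_congr rfl fun i _ => Finset.sum_comm
    _ = ∑ j ∈ C, ∑ i ∈ A, ∑ p ∈ B i, ∑ q ∈ D j, F i p j q := Finset.sum_comm
    _ = ∑ j ∈ C, ∑ i ∈ A, ∑ q ∈ D j, ∑ p ∈ B i, F i p j q :=
        Finset.sum_congr rfl fun j _ => Finset.sum_congr rfl fun i _ => Finset.sum_comm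
    _ = ∑ j ∈ C, ∑ q ∈ D j, ∑ i ∈ A, ∑ p ∈ B i, F i p j q :=
        Finset.sum_congr rfl fun j _ => Finset.sum_comm

variable {k H : Type*} [CommRing k] [Ring H] [HopfAlgebra k H]

lemma comul2_tmul (x y : H) (rx : CoalgRepr k x) (ry : CoalgRepr k y) :
    comul (R := k) (x ⊗ₜ[k] y) =
      ∑ i ∈ rx.index, ∑ j ∈ ry.index,
        (rx.left i ⊗ₜ[k] ry.left j) ⊗ₜ[k] (rx.right i ⊗ₜ[k] ry.right j) := by
  rw [TensorProduct.comul_def, LinearMap.comp_apply, AlgebraTensorModule.map_tmul,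
    ← rx.eq, ← ry.eq, TensorProduct.sum_tmul, map_sum]
  refine Finset.sum_congr rfl fun i _ => ?_
  rw [TensorProduct.tmul_sum, map_sum]
  refine Finset.sum_congr rfl fun j _ => ?_
  exact TensorProduct.tensorTensorTensorComm_tmul ..

/-- A representation of a pure tensor in `H ⊗ H`. -/
noncomputable def tmulRepr (x y : H) (rx : CoalgRepr k x) (ry : CoalgRepr k y) :
    CoalgRepr k (x ⊗ₜ[k] y) where
  index := rx.index ×ˢ ry.index
  left := fun ij => rx.left ij.1 ⊗ₜ[k] ry.left ij.2
  right := fun ij => rx.right ij.1 ⊗ₜ[k] ry.right ij.2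
  eq := by rw [Finset.sum_product, comul2_tmul x y rx ry]

lemma counit2_tmul (x y : H) :
    counit (R := k) (x ⊗ₜ[k] y) = counit (R := k) x * counit (R := k) y := by
  rw [TensorProduct.counit_def]
  simp [mul'_apply, mul_comm]

set_option maxHeartbeats 1000000 in
set_option synthInstance.maxHeartbeats 400000 in
noncomputable instance tensorCoalgebra : Coalgebra k (H ⊗[k] H) where
  toCoalgebraStruct := inferInstance
  coassoc := by
    ext x y
    set rx := cR k x; set ry := cR k y
    set t : (i : rx.ι) → CoalgRepr k (rx.left i) := fun i => cR k _
    set s : (i : rx.ι) → CoalgRepr k (rx.right i) := fun i => cR k _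
    set u : (j : ry.ι) → CoalgRepr k (ry.left j) := fun j => cR k _
    set v : (j : ry.ι) → CoalgRepr k (ry.right j) := fun j => cR k _
    have step1 := three_leg (R := k) (C := H)
      (∑ j ∈ ry.index, ∑ q ∈ (u j).index,
        map ((TensorProduct.mk k H H).flip ((u j).left q))
          (map ((TensorProduct.mk k H H).flip ((u j).right q))
            ((TensorProduct.mk k H H).flip (ry.right j)))) x rx t s
    have step2 := three_leg (R := k) (C := H)
      (∑ i ∈ rx.index, ∑ p ∈ (s i).index,
        map (TensorProduct.mk k H H (rx.left i))
          (map (TensorProduct.mk k H H ((s i).left p))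
            (TensorProduct.mk k H H ((s i).right p)))) y ry u v
    simp only [LinearMap.sum_apply, map_tmul, LinearMap.flip_apply, TensorProduct.mk_apply]
      at step1 step2
    calc (TensorProduct.assoc k _ _ _) ((comul (R := k)).rTensor _ (comul (x ⊗ₜ[k] y)))
        = ∑ i ∈ rx.index, ∑ p ∈ (t i).index, ∑ j ∈ ry.index, ∑ q ∈ (u j).index,
            ((t i).left p ⊗ₜ[k] (u j).left q) ⊗ₜ[k]
              (((t i).right p ⊗ₜ[k] (u j).right q) ⊗ₜ[k] (rx.right i ⊗ₜ[k] ry.right j)) := by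
          rw [comul2_tmul x y rx ry]
          simp only [map_sum, LinearMap.rTensor_tmul]
          have inner : ∀ i ∈ rx.index, ∀ j ∈ ry.index,
              (TensorProduct.assoc k (H ⊗[k] H) (H ⊗[k] H) (H ⊗[k] H))
                (comul (R := k) (rx.left i ⊗ₜ[k] ry.left j) ⊗ₜ[k]
                  (rx.right i ⊗ₜ[k] ry.right j)) =
              ∑ p ∈ (t i).index, ∑ q ∈ (u j).index,
                ((t i).left p ⊗ₜ[k] (u j).left q) ⊗ₜ[k]
                  (((t i).right p ⊗ₜ[k] (u j).right q) ⊗ₜ[k] (rx.right i ⊗ₜ[k] ry.right j)) := by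
            intro i _ j _
            rw [comul2_tmul _ _ (t i) (u j)]
            simp only [TensorProduct.sum_tmul, map_sum, TensorProduct.assoc_tmul]
          rw [Finset.sum_congr rfl fun i hi => Finset.sum_congr rfl fun j hj => inner i hi j hj]
          exact Finset.sum_congr rfl fun i _ => Finset.sum_comm
      _ = ∑ i ∈ rx.index, ∑ p ∈ (s i).index, ∑ j ∈ ry.index, ∑ q ∈ (u j).index,
            (rx.left i ⊗ₜ[k] (u j).left q) ⊗ₜ[k]
              (((s i).left p ⊗ₜ[k] (u j).right q) ⊗ₜ[k] ((s i).right p ⊗ₜ[k] ry.right j)) :=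
          step1
      _ = ∑ j ∈ ry.index, ∑ q ∈ (u j).index, ∑ i ∈ rx.index, ∑ p ∈ (s i).index,
            (rx.left i ⊗ₜ[k] (u j).left q) ⊗ₜ[k]
              (((s i).left p ⊗ₜ[k] (u j).right q) ⊗ₜ[k] ((s i).right p ⊗ₜ[k] ry.right j)) :=
          sum4_swap ..
      _ = ∑ j ∈ ry.index, ∑ q ∈ (v j).index, ∑ i ∈ rx.index, ∑ p ∈ (s i).index,
            (rx.left i ⊗ₜ[k] ry.left j) ⊗ₜ[k]
              (((s i).left p ⊗ₜ[k] (v j).left q) ⊗ₜ[k] ((s i).right p ⊗ₜ[k] (v j).right q)) :=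
          step2
      _ = ∑ i ∈ rx.index, ∑ p ∈ (s i).index, ∑ j ∈ ry.index, ∑ q ∈ (v j).index,
            (rx.left i ⊗ₜ[k] ry.left j) ⊗ₜ[k]
              (((s i).left p ⊗ₜ[k] (v j).left q) ⊗ₜ[k] ((s i).right p ⊗ₜ[k] (v j).right q)) :=
          (sum4_swap rx.index (fun i => (s i).index) ry.index (fun j => (v j).index)
            (fun i p j q => (rx.left i ⊗ₜ[k] ry.left j) ⊗ₜ[k]
              (((s i).left p ⊗ₜ[k] (v j).left q) ⊗ₜ[k] ((s i).right p ⊗ₜ[k] (v j).right q)))).symm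
      _ = (comul (R := k)).lTensor _ (comul (x ⊗ₜ[k] y)) := by
          rw [comul2_tmul x y rx ry]
          simp only [map_sum, LinearMap.lTensor_tmul]
          have inner : ∀ i ∈ rx.index, ∀ j ∈ ry.index,
              (rx.left i ⊗ₜ[k] ry.left j) ⊗ₜ[k] comul (R := k) (rx.right i ⊗ₜ[k] ry.right j) =
              ∑ p ∈ (s i).index, ∑ q ∈ (v j).index,
                (rx.left i ⊗ₜ[k] ry.left j) ⊗ₜ[k]
                  (((s i).left p ⊗ₜ[k] (v j).left q) ⊗ₜ[k] ((s i).right p ⊗ₜ[k] (v j).right q)) := by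
            intro i _ j _
            rw [comul2_tmul _ _ (s i) (v j), TensorProduct.tmul_sum]
            exact Finset.sum_congr rfl fun p _ => by rw [TensorProduct.tmul_sum]
          rw [Finset.sum_congr rfl fun i hi => Finset.sum_congr rfl fun j hj => inner i hi j hj]
          exact (Finset.sum_congr rfl fun i _ => Finset.sum_comm).symm
  rTensor_counit_comp_comul := by
    ext x y
    set rx := cR k x; set ry := cR k y
    have hx := Coalgebra.sum_counit_tmul_eq rx.toRepr
    have hy := Coalgebra.sum_counit_tmul_eq ry.toRepr
    have hxy : (∑ i ∈ rx.index, counit (R := k) (rx.left i) ⊗ₜ[k] rx.right i) ⊗ₜ[k]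
        (∑ j ∈ ry.index, counit (R := k) (ry.left j) ⊗ₜ[k] ry.right j) =
        ((1 : k) ⊗ₜ[k] x) ⊗ₜ[k] ((1 : k) ⊗ₜ[k] y) := by rw [hx, hy]
    have h := congrArg (LinearMap.rTensor (H ⊗[k] H) (mul' k k) ∘ₗ
        (TensorProduct.tensorTensorTensorComm k k H k H).toLinearMap) hxy
    simp only [LinearMap.comp_apply, TensorProduct.sum_tmul, TensorProduct.tmul_sum, map_sum,
      LinearEquiv.coe_coe, TensorProduct.tensorTensorTensorComm_tmul,
      LinearMap.rTensor_tmul, mul'_apply, mul_one] at h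
    show (counit (R := k)).rTensor _ (comul (x ⊗ₜ[k] y)) = _
    rw [comul2_tmul x y rx ry]
    simp only [map_sum, LinearMap.rTensor_tmul, counit2_tmul]
    rw [Finset.sum_comm]
    exact h
  lTensor_counit_comp_comul := by
    ext x y
    set rx := cR k x; set ry := cR k y
    have hx := Coalgebra.sum_tmul_counit_eq rx.toRepr
    have hy := Coalgebra.sum_tmul_counit_eq ry.toRepr
    have hxy : (∑ i ∈ rx.index, rx.left i ⊗ₜ[k] counit (R := k) (rx.right i)) ⊗ₜ[k]
        (∑ j ∈ ry.index, ry.left j ⊗ₜ[k] counit (R := k) (ry.right j)) =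
        (x ⊗ₜ[k] (1 : k)) ⊗ₜ[k] (y ⊗ₜ[k] (1 : k)) := by rw [hx, hy]
    have h := congrArg (LinearMap.lTensor (H ⊗[k] H) (mul' k k) ∘ₗ
        (TensorProduct.tensorTensorTensorComm k H k H k).toLinearMap) hxy
    simp only [LinearMap.comp_apply, TensorProduct.sum_tmul, TensorProduct.tmul_sum, map_sum,
      LinearEquiv.coe_coe, TensorProduct.tensorTensorTensorComm_tmul,
      LinearMap.lTensor_tmul, mul'_apply, mul_one] at h
    show (counit (R := k)).lTensor _ (comul (x ⊗ₜ[k] y)) = _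
    rw [comul2_tmul x y rx ry]
    simp only [map_sum, LinearMap.lTensor_tmul, counit2_tmul]
    rw [Finset.sum_comm]
    exact h

end TensorCoalg


section MP

variable {k H : Type*} [CommRing k] [Ring H] [HopfAlgebra k H]
variable {f g : H ⊗[k] H →ₗ[k] H}

/-- Repr for the image under a left action. -/
noncomputable def fRepr (hf : IsLeftModCoalgAction k H f) (x a : H)
    (rx : CoalgRepr k x) (ra : CoalgRepr k a) :
    CoalgRepr k (f (x ⊗ₜ[k] a)) where
  index := rx.index ×ˢ ra.index
  left := fun ij => f (rx.left ij.1 ⊗ₜ[k] ra.left ij.2)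
  right := fun ij => f (rx.right ij.1 ⊗ₜ[k] ra.right ij.2)
  eq := by rw [Finset.sum_product, hf.comul_act x a rx ra]

noncomputable def gRepr (hg : IsRightModCoalgAction k H g) (x a : H)
    (rx : CoalgRepr k x) (ra : CoalgRepr k a) :
    CoalgRepr k (g (x ⊗ₜ[k] a)) where
  index := rx.index ×ˢ ra.index
  left := fun ij => g (rx.left ij.1 ⊗ₜ[k] ra.left ij.2)
  right := fun ij => g (rx.right ij.1 ⊗ₜ[k] ra.right ij.2)
  eq := by rw [Finset.sum_product, hg.comul_act x a rx ra]

/-- Repr for the (antipode k) of an element. -/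
noncomputable def sRepr (x : H) (r : CoalgRepr k x) :
    CoalgRepr k (antipode (R := k) x) where
  index := r.index
  left := fun i => antipode (R := k) (r.right i)
  right := fun i => antipode (R := k) (r.left i)
  eq := by
    have h := LinearMap.congr_fun (comul_antipode (k := k) (H := H)) x
    simp only [LinearMap.comp_apply] at h
    rw [h, ← r.eq, map_sum]
    simp

lemma g_comul (hg : IsRightModCoalgAction k H g) :
    comul (R := k) ∘ₗ g = TensorProduct.map g g ∘ₗ comul := by
  ext x a
  simp only [LinearMap.comp_apply, AlgebraTensorModule.curry_apply, curry_apply,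
    LinearMap.coe_restrictScalars]
  rw [hg.comul_act x a (finRepr (cR k x)) (finRepr (cR k a)), comul2_tmul x a (finRepr (cR k x)) (finRepr (cR k a)), map_sum]
  exact Finset.sum_congr rfl fun i _ => by rw [map_sum]; exact Finset.sum_congr rfl fun j _ => rfl

lemma g_counit (hg : IsRightModCoalgAction k H g) :
    counit (R := k) ∘ₗ g = counit (R := k) (A := H ⊗[k] H) := by
  ext x a
  simp only [LinearMap.comp_apply, AlgebraTensorModule.curry_apply, curry_apply,
    LinearMap.coe_restrictScalars]
  rw [hg.counit_act x a, counit2_tmul]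

lemma f_comul (hf : IsLeftModCoalgAction k H f) :
    comul (R := k) ∘ₗ f = TensorProduct.map f f ∘ₗ comul := by
  ext x a
  simp only [LinearMap.comp_apply, AlgebraTensorModule.curry_apply, curry_apply,
    LinearMap.coe_restrictScalars]
  rw [hf.comul_act x a (finRepr (cR k x)) (finRepr (cR k a)), comul2_tmul x a (finRepr (cR k x)) (finRepr (cR k a)), map_sum]
  exact Finset.sum_congr rfl fun i _ => by rw [map_sum]; exact Finset.sum_congr rfl fun j _ => rfl

lemma f_counit (hf : IsLeftModCoalgAction k H f) :
    counit (R := k) ∘ₗ f = counit (R := k) (A := H ⊗[k] H) := by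
  ext x a
  simp only [LinearMap.comp_apply, AlgebraTensorModule.curry_apply, curry_apply,
    LinearMap.coe_restrictScalars]
  rw [hf.counit_act x a, counit2_tmul]

/-- `T1 (x ⊗ y) = ∑ S(x₁) ↼ (x₂ ⇀ y)`. -/
noncomputable def T1 (f g : H ⊗[k] H →ₗ[k] H) : H ⊗[k] H →ₗ[k] H :=
  g ∘ₗ TensorProduct.map (antipode k) f ∘ₗ (TensorProduct.assoc k H H H).toLinearMap ∘ₗ
    (comul (R := k)).rTensor H

/-- `T2 (x ⊗ y) = ∑ (x ↼ y₁) ⇀ S(y₂)`. -/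
noncomputable def T2 (f g : H ⊗[k] H →ₗ[k] H) : H ⊗[k] H →ₗ[k] H :=
  f ∘ₗ TensorProduct.map g (antipode k) ∘ₗ (TensorProduct.assoc k H H H).symm.toLinearMap ∘ₗ
    (comul (R := k)).lTensor H

lemma T1_tmul (x y : H) (rx : CoalgRepr k x) :
    T1 f g (x ⊗ₜ[k] y) =
      ∑ i ∈ rx.index, g (antipode (R := k) (rx.left i) ⊗ₜ[k] f (rx.right i ⊗ₜ[k] y)) := by
  simp only [T1, LinearMap.comp_apply, LinearMap.rTensor_tmul, ← rx.eq,
    TensorProduct.sum_tmul, map_sum, LinearEquiv.coe_coe, TensorProduct.assoc_tmul,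
    TensorProduct.map_tmul]

lemma T2_tmul (x y : H) (ry : CoalgRepr k y) :
    T2 f g (x ⊗ₜ[k] y) =
      ∑ j ∈ ry.index, f (g (x ⊗ₜ[k] ry.left j) ⊗ₜ[k] antipode (R := k) (ry.right j)) := by
  simp only [T2, LinearMap.comp_apply, LinearMap.lTensor_tmul, ← ry.eq,
    TensorProduct.tmul_sum, map_sum, LinearEquiv.coe_coe, TensorProduct.assoc_symm_tmul,
    TensorProduct.map_tmul]

end MP


section MP2

variable {k H : Type*} [CommRing k] [Ring H] [HopfAlgebra k H]
variable {f g : H ⊗[k] H →ₗ[k] H}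

lemma conv_T1_g (h : IsMatchedPairOfActions k H f g) :
    conv (T1 f g) g = cunit := by
  ext x y
  simp only [LinearMap.comp_apply, AlgebraTensorModule.curry_apply, curry_apply,
    LinearMap.coe_restrictScalars]
  set rx := cR k x with hrx
  set ry := finRepr (cR k y) with hry
  set t : (i : rx.ι) → CoalgRepr k (rx.left i) := fun i => cR k _ with ht
  set s : (i : rx.ι) → CoalgRepr k (rx.right i) := fun i => finRepr (cR k _) with hs
  rw [conv_apply _ _ _ (tmulRepr x y rx ry), cunit_apply]
  set L : H ⊗[k] (H ⊗[k] H) →ₗ[k] H :=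
    ∑ j ∈ ry.index, mul' k H ∘ₗ
      TensorProduct.map (g ∘ₗ TensorProduct.map (antipode k) (f ∘ₗ (TensorProduct.mk k H H).flip (ry.left j)))
        (g ∘ₗ (TensorProduct.mk k H H).flip (ry.right j)) ∘ₗ
      (TensorProduct.assoc k H H H).symm.toLinearMap with hL
  have hLapp : ∀ u v w : H, L (u ⊗ₜ (v ⊗ₜ w)) =
      ∑ j ∈ ry.index, g (antipode (R := k) u ⊗ₜ f (v ⊗ₜ ry.left j)) * g (w ⊗ₜ ry.right j) := by
    intro u v w
    simp [hL, mul'_apply]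
  calc ∑ ij ∈ (tmulRepr x y rx ry).index,
        T1 f g ((tmulRepr x y rx ry).left ij) * g ((tmulRepr x y rx ry).right ij)
      = ∑ i ∈ rx.index, ∑ j ∈ ry.index,
          T1 f g (rx.left i ⊗ₜ ry.left j) * g (rx.right i ⊗ₜ ry.right j) := by
        rw [tmulRepr, Finset.sum_product]
    _ = ∑ i ∈ rx.index, ∑ p ∈ (t i).index,
          L ((t i).left p ⊗ₜ ((t i).right p ⊗ₜ rx.right i)) := by
        refine Finset.sum_congr rfl fun i _ => ?_
        rw [Finset.sum_congr rfl fun j (_ : j ∈ ry.index) => by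
          rw [T1_tmul _ _ (t i), Finset.sum_mul]]
        rw [Finset.sum_comm]
        exact Finset.sum_congr rfl fun p _ => by rw [hLapp]
    _ = ∑ i ∈ rx.index, ∑ p ∈ (s i).index,
          L (rx.left i ⊗ₜ ((s i).left p ⊗ₜ (s i).right p)) := three_leg L x rx t s
    _ = ∑ i ∈ rx.index, g ((antipode (R := k) (rx.left i) * rx.right i) ⊗ₜ y) := by
        refine Finset.sum_congr rfl fun i _ => ?_
        rw [Finset.sum_congr rfl fun p (_ : p ∈ (s i).index) => hLapp _ _ _]
        exact (h.mp3 (antipode (R := k) (rx.left i)) (rx.right i) y (s i) ry).symm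
    _ = algebraMap k H (counit (R := k) (x ⊗ₜ[k] y)) := by
        rw [← map_sum g (fun i => (antipode (R := k) (rx.left i) * rx.right i) ⊗ₜ[k] y),
          ← TensorProduct.sum_tmul, sum_antipode_mul_eq_smul rx.toRepr, ← TensorProduct.smul_tmul',
          map_smul, h.mp4, counit2_tmul, smul_smul, Algebra.algebraMap_eq_smul_one]

lemma conv_f_T2 (h : IsMatchedPairOfActions k H f g) :
    conv f (T2 f g) = cunit := by
  ext x y
  simp only [LinearMap.comp_apply, AlgebraTensorModule.curry_apply, curry_apply,
    LinearMap.coe_restrictScalars]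
  set rx := finRepr (cR k x) with hrx
  set ry := cR k y with hry
  set t : (j : ry.ι) → CoalgRepr k (ry.left j) := fun j => finRepr (cR k _) with ht
  set s : (j : ry.ι) → CoalgRepr k (ry.right j) := fun j => cR k _ with hs
  rw [conv_apply _ _ _ (tmulRepr x y rx ry), cunit_apply]
  set L : H ⊗[k] (H ⊗[k] H) →ₗ[k] H :=
    ∑ i ∈ rx.index, mul' k H ∘ₗ
      TensorProduct.map (f ∘ₗ TensorProduct.mk k H H (rx.left i))
        (f ∘ₗ TensorProduct.map (g ∘ₗ TensorProduct.mk k H H (rx.right i)) (antipode k)) with hL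
  have hLapp : ∀ u v w : H, L (u ⊗ₜ (v ⊗ₜ w)) =
      ∑ i ∈ rx.index, f (rx.left i ⊗ₜ u) * f (g (rx.right i ⊗ₜ v) ⊗ₜ antipode (R := k) w) := by
    intro u v w
    simp [hL, mul'_apply]
  calc ∑ ij ∈ (tmulRepr x y rx ry).index,
        f ((tmulRepr x y rx ry).left ij) * T2 f g ((tmulRepr x y rx ry).right ij)
      = ∑ i ∈ rx.index, ∑ j ∈ ry.index,
          f (rx.left i ⊗ₜ ry.left j) * T2 f g (rx.right i ⊗ₜ ry.right j) := by
        rw [tmulRepr, Finset.sum_product]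
    _ = ∑ j ∈ ry.index, ∑ p ∈ (s j).index,
          L (ry.left j ⊗ₜ ((s j).left p ⊗ₜ (s j).right p)) := by
        rw [Finset.sum_comm]
        refine Finset.sum_congr rfl fun j _ => ?_
        rw [Finset.sum_congr rfl fun i (_ : i ∈ rx.index) => by
          rw [T2_tmul _ _ (s j), Finset.mul_sum]]
        rw [Finset.sum_comm]
        exact Finset.sum_congr rfl fun p _ => by rw [hLapp]
    _ = ∑ j ∈ ry.index, ∑ p ∈ (t j).index,
          L ((t j).left p ⊗ₜ ((t j).right p ⊗ₜ ry.right j)) := (three_leg L y ry t s).symm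
    _ = ∑ j ∈ ry.index, f (x ⊗ₜ (ry.left j * antipode (R := k) (ry.right j))) := by
        refine Finset.sum_congr rfl fun j _ => ?_
        rw [Finset.sum_congr rfl fun p (_ : p ∈ (t j).index) => hLapp _ _ _]
        rw [Finset.sum_comm]
        exact (h.mp1 x (ry.left j) (antipode (R := k) (ry.right j)) rx (t j)).symm
    _ = algebraMap k H (counit (R := k) (x ⊗ₜ[k] y)) := by
        rw [← map_sum f (fun j => x ⊗ₜ[k] (ry.left j * antipode (R := k) (ry.right j))),
          ← TensorProduct.tmul_sum, sum_mul_antipode_eq_smul ry.toRepr, TensorProduct.tmul_smul,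
          map_smul, h.mp2, counit2_tmul, smul_smul, mul_comm, Algebra.algebraMap_eq_smul_one]

lemma antipode_comp_g (h : IsMatchedPairOfActions k H f g) :
    antipode (R := k) ∘ₗ g = T1 f g :=
  (conv_cancel (T1 f g) g (antipode (R := k) ∘ₗ g) (conv_T1_g h)
    (conv_antipode_comp_right g (g_comul h.right_action) (g_counit h.right_action))).symm

lemma antipode_comp_f (h : IsMatchedPairOfActions k H f g) :
    antipode (R := k) ∘ₗ f = T2 f g :=
  conv_cancel (antipode (R := k) ∘ₗ f) f (T2 f g)
    (conv_antipode_comp_left f (f_comul h.left_action) (f_counit h.left_action))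
    (conv_f_T2 h)

end MP2


section Final

variable {k H : Type*} [CommRing k] [Ring H] [HopfAlgebra k H]
variable {f g : H ⊗[k] H →ₗ[k] H}

lemma braidOp_tmul (a b : H) (ra : CoalgRepr k a) (rb : CoalgRepr k b) :
    braidOp k H f g (a ⊗ₜ[k] b) =
      ∑ i ∈ ra.index, ∑ j ∈ rb.index,
        f (ra.left i ⊗ₜ rb.left j) ⊗ₜ[k] g (ra.right i ⊗ₜ rb.right j) := by
  simp only [braidOp, LinearMap.comp_apply, TensorProduct.map_tmul, ← ra.eq, ← rb.eq,
    TensorProduct.sum_tmul, TensorProduct.tmul_sum, map_sum, LinearEquiv.coe_coe,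
    TensorProduct.tensorTensorTensorComm_tmul]
  exact Finset.sum_comm

lemma repr_sum_eq {M : Type*} [AddCommMonoid M] [Module k M] (L : H ⊗[k] H →ₗ[k] M)
    (x : H) (r r' : CoalgRepr k x) :
    ∑ i ∈ r.index, L (r.left i ⊗ₜ r.right i) = ∑ i ∈ r'.index, L (r'.left i ⊗ₜ r'.right i) := by
  have k1 : ∑ i ∈ r.index, L (r.left i ⊗ₜ r.right i) = L (comul (R := k) x) := by
    rw [← map_sum, r.eq]
  have k2 : ∑ i ∈ r'.index, L (r'.left i ⊗ₜ r'.right i) = L (comul (R := k) x) := by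
    rw [← map_sum, r'.eq]
  rw [k1, k2]

lemma part1 (h : IsMatchedPairOfActions k H f g) (x y : H)
    (rx : CoalgRepr k x) (ry : CoalgRepr k y) :
    (∑ i ∈ rx.index,
        braidOp k H f g (antipode (R := k) (rx.left i) ⊗ₜ[k] f (rx.right i ⊗ₜ y))) =
      ∑ j ∈ ry.index, ry.left j ⊗ₜ[k] antipode (R := k) (g (x ⊗ₜ ry.right j)) := by
  classical
  set ryy := finRepr (cR k y) with hryy
  set t : (i : rx.ι) → CoalgRepr k (rx.left i) := fun i => cR k _ with ht
  set s2 : (i : rx.ι) → CoalgRepr k (rx.right i) := fun i => finRepr (cR k _) with hs2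
  -- the A_j and B_j building blocks
  set A : ryy.ι → (H ⊗[k] H →ₗ[k] H) := fun j =>
    f ∘ₗ (TensorProduct.mk k H H).flip (ryy.left j) ∘ₗ mul' k H ∘ₗ
      TensorProduct.map (antipode k) LinearMap.id with hA
  have hAapp : ∀ (j : ryy.ι) (u v : H), A j (u ⊗ₜ v) =
      f ((antipode (R := k) u * v) ⊗ₜ ryy.left j) := by
    intro j u v; simp [hA, mul'_apply]
  set B : ryy.ι → (H ⊗[k] H →ₗ[k] H) := fun j =>
    g ∘ₗ TensorProduct.map (antipode k) (f ∘ₗ (TensorProduct.mk k H H).flip (ryy.right j)) with hB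
  have hBapp : ∀ (j : ryy.ι) (u v : H), B j (u ⊗ₜ v) =
      g (antipode (R := k) u ⊗ₜ f (v ⊗ₜ ryy.right j)) := by
    intro j u v; simp [hB]
  set L1' : H ⊗[k] (H ⊗[k] H) →ₗ[k] H ⊗[k] H :=
    (∑ j ∈ ryy.index, TensorProduct.map (A j) (B j)) ∘ₗ
      (TensorProduct.tensorTensorTensorComm k H H H H).toLinearMap ∘ₗ
      ((TensorProduct.comm k H H).toLinearMap.rTensor (H ⊗[k] H)) ∘ₗ
      (TensorProduct.assoc k H H (H ⊗[k] H)).symm.toLinearMap ∘ₗ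
      (LinearMap.lTensor H ((comul (R := k)).lTensor H)) with hL1
  have hL1app : ∀ (u v w : H) (rw : CoalgRepr k w), L1' (u ⊗ₜ (v ⊗ₜ w)) =
      ∑ q ∈ rw.index, ∑ j ∈ ryy.index,
        f ((antipode (R := k) v * rw.left q) ⊗ₜ ryy.left j) ⊗ₜ[k]
          g (antipode (R := k) u ⊗ₜ f (rw.right q ⊗ₜ ryy.right j)) := by
    intro u v w rw
    have e0 : (LinearMap.lTensor H ((comul (R := k)).lTensor H)) (u ⊗ₜ[k] (v ⊗ₜ[k] w)) =
        ∑ q ∈ rw.index, u ⊗ₜ[k] (v ⊗ₜ[k] (rw.left q ⊗ₜ[k] rw.right q)) := by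
      rw [LinearMap.lTensor_tmul, LinearMap.lTensor_tmul, ← rw.eq,
        TensorProduct.tmul_sum, TensorProduct.tmul_sum]
    rw [hL1]
    simp only [LinearMap.comp_apply, e0, map_sum, LinearEquiv.coe_coe,
      TensorProduct.assoc_symm_tmul, LinearMap.rTensor_tmul, TensorProduct.comm_tmul,
      TensorProduct.tensorTensorTensorComm_tmul, LinearMap.sum_apply,
      TensorProduct.map_tmul, hAapp, hBapp]
  calc ∑ i ∈ rx.index,
        braidOp k H f g (antipode (R := k) (rx.left i) ⊗ₜ[k] f (rx.right i ⊗ₜ y))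
      = ∑ i ∈ rx.index, ∑ p ∈ (t i).index,
          L1' ((t i).left p ⊗ₜ ((t i).right p ⊗ₜ rx.right i)) := by
        refine Finset.sum_congr rfl fun i _ => ?_
        rw [braidOp_tmul _ _ (sRepr (rx.left i) (t i))
          (fRepr h.left_action (rx.right i) y (s2 i) ryy)]
        refine Finset.sum_congr rfl fun p _ => ?_
        rw [hL1app _ _ _ (s2 i)]
        simp only [sRepr, fRepr, Finset.sum_product]
        refine Finset.sum_congr rfl fun q _ => Finset.sum_congr rfl fun j _ => ?_
        rw [← h.left_action.mul_act]
    _ = ∑ i ∈ rx.index, ∑ p ∈ (s2 i).index,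
          L1' (rx.left i ⊗ₜ ((s2 i).left p ⊗ₜ (s2 i).right p)) := three_leg L1' x rx t s2
    _ = ∑ i ∈ rx.index, ∑ j ∈ ryy.index,
          ryy.left j ⊗ₜ[k] g (antipode (R := k) (rx.left i) ⊗ₜ f (rx.right i ⊗ₜ ryy.right j)) := by
        refine Finset.sum_congr rfl fun i _ => ?_
        set L2' : H ⊗[k] (H ⊗[k] H) →ₗ[k] H ⊗[k] H :=
          (∑ j ∈ ryy.index, TensorProduct.map (A j)
            (g ∘ₗ TensorProduct.mk k H H (antipode (R := k) (rx.left i)) ∘ₗ f ∘ₗ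
              (TensorProduct.mk k H H).flip (ryy.right j))) ∘ₗ
            (TensorProduct.assoc k H H H).symm.toLinearMap with hL2
        have hL2app : ∀ u v w : H, L2' (u ⊗ₜ (v ⊗ₜ w)) =
            ∑ j ∈ ryy.index, f ((antipode (R := k) u * v) ⊗ₜ ryy.left j) ⊗ₜ[k]
              g (antipode (R := k) (rx.left i) ⊗ₜ f (w ⊗ₜ ryy.right j)) := by
          intro u v w
          simp [hL2, hAapp, mul'_apply]
        have e1 : ∀ p ∈ (s2 i).index, L1' (rx.left i ⊗ₜ ((s2 i).left p ⊗ₜ (s2 i).right p)) =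
            ∑ q ∈ (finRepr (cR k ((s2 i).right p))).index,
              L2' ((s2 i).left p ⊗ₜ ((finRepr (cR k ((s2 i).right p))).left q ⊗ₜ
                (finRepr (cR k ((s2 i).right p))).right q)) := by
          intro p _
          rw [hL1app _ _ _ (finRepr (cR k ((s2 i).right p)))]
          exact Finset.sum_congr rfl fun q _ => (hL2app _ _ _).symm
        rw [Finset.sum_congr rfl e1,
          ← three_leg L2' (rx.right i) (s2 i) (fun p => finRepr (cR k _)) (fun p => finRepr (cR k _))]
        trans (∑ p ∈ (s2 i).index, counit (R := k) ((s2 i).left p) •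
            ∑ j ∈ ryy.index, ryy.left j ⊗ₜ[k]
              g (antipode (R := k) (rx.left i) ⊗ₜ f ((s2 i).right p ⊗ₜ ryy.right j)))
        · refine Finset.sum_congr rfl fun p _ => ?_
          simp only [hL2app]
          rw [Finset.sum_comm, Finset.smul_sum]
          refine Finset.sum_congr rfl fun j _ => ?_
          rw [← TensorProduct.sum_tmul, ← map_sum,
            ← TensorProduct.sum_tmul, sum_antipode_mul_eq_smul (finRepr (cR k ((s2 i).left p))).toRepr,
            ← TensorProduct.smul_tmul', map_smul, h.left_action.one_act,
            ← TensorProduct.smul_tmul']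
        have e3 : ∀ p ∈ (s2 i).index,
            (counit (R := k) ((s2 i).left p) •
              ∑ j ∈ ryy.index, ryy.left j ⊗ₜ[k]
                g (antipode (R := k) (rx.left i) ⊗ₜ f ((s2 i).right p ⊗ₜ ryy.right j))) =
            ∑ j ∈ ryy.index, ryy.left j ⊗ₜ[k]
              g (antipode (R := k) (rx.left i) ⊗ₜ
                f ((counit (R := k) ((s2 i).left p) • (s2 i).right p) ⊗ₜ ryy.right j)) := by
          intro p _
          rw [Finset.smul_sum]
          refine Finset.sum_congr rfl fun j _ => ?_
          rw [← TensorProduct.smul_tmul', map_smul f, TensorProduct.tmul_smul,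
            map_smul g, TensorProduct.tmul_smul]
        rw [Finset.sum_congr rfl e3, Finset.sum_comm]
        refine Finset.sum_congr rfl fun j _ => ?_
        rw [← TensorProduct.tmul_sum]
        congr 1
        rw [← map_sum g, ← TensorProduct.tmul_sum, ← map_sum f, ← TensorProduct.sum_tmul,
          sum_counit_smul _ (s2 i)]
    _ = ∑ j ∈ ryy.index, ryy.left j ⊗ₜ[k] antipode (R := k) (g (x ⊗ₜ ryy.right j)) := by
        rw [Finset.sum_comm]
        refine Finset.sum_congr rfl fun j _ => ?_
        rw [← TensorProduct.tmul_sum, ← T1_tmul x (ryy.right j) rx,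
          ← antipode_comp_g h, LinearMap.comp_apply]
    _ = ∑ j ∈ ry.index, ry.left j ⊗ₜ[k] antipode (R := k) (g (x ⊗ₜ ry.right j)) := by
        have := repr_sum_eq (TensorProduct.map LinearMap.id
          (antipode (R := k) ∘ₗ g ∘ₗ TensorProduct.mk k H H x)) y ryy ry
        simpa using this

end Final


lemma part2 {k H : Type*} [CommRing k] [Ring H] [HopfAlgebra k H]
    {f g : H ⊗[k] H →ₗ[k] H}
    (h : IsMatchedPairOfActions k H f g) (x y : H)
    (rx : CoalgRepr k x) (ry : CoalgRepr k y) :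
    (∑ j ∈ ry.index,
        braidOp k H f g (g (x ⊗ₜ ry.left j) ⊗ₜ[k] antipode (R := k) (ry.right j))) =
      ∑ i ∈ rx.index, antipode (R := k) (f (rx.left i ⊗ₜ y)) ⊗ₜ[k] rx.right i := by
  classical
  set rxx := finRepr (cR k x) with hrxx
  set u : (j : ry.ι) → CoalgRepr k (ry.left j) := fun j => finRepr (cR k _) with hu
  set v : (j : ry.ι) → CoalgRepr k (ry.right j) := fun j => cR k _ with hv
  set D : rxx.ι → (H ⊗[k] H →ₗ[k] H) := fun p =>
    f ∘ₗ TensorProduct.map (g ∘ₗ TensorProduct.mk k H H (rxx.left p)) (antipode k) with hD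
  have hDapp : ∀ (p : rxx.ι) (a b : H), D p (a ⊗ₜ b) =
      f (g (rxx.left p ⊗ₜ a) ⊗ₜ antipode (R := k) b) := by
    intro p a b; simp [hD]
  set E : rxx.ι → (H ⊗[k] H →ₗ[k] H) := fun p =>
    g ∘ₗ TensorProduct.map (g ∘ₗ TensorProduct.mk k H H (rxx.right p)) (antipode k) with hE
  have hEapp : ∀ (p : rxx.ι) (a b : H), E p (a ⊗ₜ b) =
      g (g (rxx.right p ⊗ₜ a) ⊗ₜ antipode (R := k) b) := by
    intro p a b; simp [hE]
  set Ly : H ⊗[k] (H ⊗[k] H) →ₗ[k] H ⊗[k] H :=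
    (∑ p ∈ rxx.index, TensorProduct.map (D p) (E p)) ∘ₗ
      (TensorProduct.tensorTensorTensorComm k H H H H).toLinearMap ∘ₗ
      (LinearMap.lTensor (H ⊗[k] H) (TensorProduct.comm k H H).toLinearMap) ∘ₗ
      (TensorProduct.assoc k H H (H ⊗[k] H)).symm.toLinearMap ∘ₗ
      (LinearMap.lTensor H ((comul (R := k)).lTensor H)) with hLy
  have hLyapp : ∀ (a b w : H) (rw : CoalgRepr k w), Ly (a ⊗ₜ (b ⊗ₜ w)) =
      ∑ p ∈ rxx.index, ∑ s ∈ rw.index,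
        f (g (rxx.left p ⊗ₜ a) ⊗ₜ antipode (R := k) (rw.right s)) ⊗ₜ[k]
          g (g (rxx.right p ⊗ₜ b) ⊗ₜ antipode (R := k) (rw.left s)) := by
    intro a b w rw
    have e0 : (LinearMap.lTensor H ((comul (R := k)).lTensor H)) (a ⊗ₜ[k] (b ⊗ₜ[k] w)) =
        ∑ s ∈ rw.index, a ⊗ₜ[k] (b ⊗ₜ[k] (rw.left s ⊗ₜ[k] rw.right s)) := by
      rw [LinearMap.lTensor_tmul, LinearMap.lTensor_tmul, ← rw.eq,
        TensorProduct.tmul_sum, TensorProduct.tmul_sum]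
    rw [hLy]
    simp only [LinearMap.comp_apply, e0, map_sum, LinearEquiv.coe_coe,
      TensorProduct.assoc_symm_tmul, LinearMap.lTensor_tmul, TensorProduct.comm_tmul,
      TensorProduct.tensorTensorTensorComm_tmul, LinearMap.sum_apply,
      TensorProduct.map_tmul, hDapp, hEapp]
    rw [Finset.sum_comm]
  calc ∑ j ∈ ry.index,
        braidOp k H f g (g (x ⊗ₜ ry.left j) ⊗ₜ[k] antipode (R := k) (ry.right j))
      = ∑ j ∈ ry.index, ∑ q ∈ (u j).index,
          Ly ((u j).left q ⊗ₜ ((u j).right q ⊗ₜ ry.right j)) := by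
        refine Finset.sum_congr rfl fun j _ => ?_
        rw [braidOp_tmul _ _ (gRepr h.right_action x (ry.left j) rxx (u j))
          (sRepr (ry.right j) (v j))]
        simp only [gRepr, sRepr, Finset.sum_product]
        rw [Finset.sum_comm]
        exact Finset.sum_congr rfl fun q _ => (hLyapp _ _ _ (v j)).symm
    _ = ∑ j ∈ ry.index, ∑ q ∈ (v j).index,
          Ly (ry.left j ⊗ₜ ((v j).left q ⊗ₜ (v j).right q)) := three_leg Ly y ry u v
    _ = ∑ j ∈ ry.index, ∑ q ∈ (v j).index,
          counit (R := k) ((v j).left q) •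
            ∑ p ∈ rxx.index,
              f (g (rxx.left p ⊗ₜ ry.left j) ⊗ₜ antipode (R := k) ((v j).right q)) ⊗ₜ[k]
                rxx.right p := by
        refine Finset.sum_congr rfl fun j _ => ?_
        set L2y : H ⊗[k] (H ⊗[k] H) →ₗ[k] H ⊗[k] H :=
          (∑ p ∈ rxx.index, (TensorProduct.comm k H H).toLinearMap ∘ₗ
            TensorProduct.map (g ∘ₗ TensorProduct.map (g ∘ₗ TensorProduct.mk k H H (rxx.right p)) (antipode k))
              (f ∘ₗ TensorProduct.mk k H H (g (rxx.left p ⊗ₜ ry.left j)) ∘ₗ (antipode k))) ∘ₗ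
            (TensorProduct.assoc k H H H).symm.toLinearMap with hL2y
        have hL2yapp : ∀ a b c : H, L2y (a ⊗ₜ (b ⊗ₜ c)) =
            ∑ p ∈ rxx.index,
              f (g (rxx.left p ⊗ₜ ry.left j) ⊗ₜ antipode (R := k) c) ⊗ₜ[k]
                g (g (rxx.right p ⊗ₜ a) ⊗ₜ antipode (R := k) b) := by
          intro a b c
          simp [hL2y]
        have e1 : ∀ q ∈ (v j).index,
            Ly (ry.left j ⊗ₜ ((v j).left q ⊗ₜ (v j).right q)) =
            ∑ s ∈ (cR k ((v j).right q)).index,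
              L2y ((v j).left q ⊗ₜ ((cR k ((v j).right q)).left s ⊗ₜ
                (cR k ((v j).right q)).right s)) := by
          intro q _
          rw [hLyapp _ _ _ (cR k ((v j).right q)), Finset.sum_comm]
          exact Finset.sum_congr rfl fun s _ => (hL2yapp _ _ _).symm
        rw [Finset.sum_congr rfl e1,
          ← three_leg L2y (ry.right j) (v j) (fun q => cR k _) (fun q => cR k _)]
        refine Finset.sum_congr rfl fun q _ => ?_
        simp only [hL2yapp]
        rw [Finset.sum_comm, Finset.smul_sum]
        refine Finset.sum_congr rfl fun p _ => ?_
        have e2 : ∀ s ∈ (cR k ((v j).left q)).index,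
            (f (g (rxx.left p ⊗ₜ ry.left j) ⊗ₜ antipode (R := k) ((v j).right q)) ⊗ₜ[k]
              g (g (rxx.right p ⊗ₜ (cR k ((v j).left q)).left s) ⊗ₜ
                antipode (R := k) ((cR k ((v j).left q)).right s))) =
            (f (g (rxx.left p ⊗ₜ ry.left j) ⊗ₜ antipode (R := k) ((v j).right q)) ⊗ₜ[k]
              g (rxx.right p ⊗ₜ ((cR k ((v j).left q)).left s *
                antipode (R := k) ((cR k ((v j).left q)).right s)))) :=
          fun s _ => by rw [← h.right_action.act_mul]
        rw [Finset.sum_congr rfl e2]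
        rw [← TensorProduct.tmul_sum, ← map_sum, ← TensorProduct.tmul_sum,
          sum_mul_antipode_eq_smul (cR k ((v j).left q)).toRepr, TensorProduct.tmul_smul,
          map_smul, h.right_action.act_one, TensorProduct.tmul_smul]
    _ = ∑ j ∈ ry.index, ∑ p ∈ rxx.index,
          f (g (rxx.left p ⊗ₜ ry.left j) ⊗ₜ antipode (R := k) (ry.right j)) ⊗ₜ[k]
            rxx.right p := by
        refine Finset.sum_congr rfl fun j _ => ?_
        have e3 : ∀ q ∈ (v j).index,
            (counit (R := k) ((v j).left q) •
              ∑ p ∈ rxx.index,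
                f (g (rxx.left p ⊗ₜ ry.left j) ⊗ₜ antipode (R := k) ((v j).right q)) ⊗ₜ[k]
                  rxx.right p) =
            ∑ p ∈ rxx.index,
              f (g (rxx.left p ⊗ₜ ry.left j) ⊗ₜ
                antipode (R := k) (counit (R := k) ((v j).left q) • (v j).right q)) ⊗ₜ[k]
                rxx.right p := by
          intro q _
          rw [Finset.smul_sum]
          refine Finset.sum_congr rfl fun p _ => ?_
          rw [map_smul (antipode k), TensorProduct.tmul_smul, map_smul f,
            ← TensorProduct.smul_tmul']
        rw [Finset.sum_congr rfl e3, Finset.sum_comm]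
        refine Finset.sum_congr rfl fun p _ => ?_
        rw [← TensorProduct.sum_tmul]
        congr 1
        rw [← map_sum, ← TensorProduct.tmul_sum, ← map_sum, sum_counit_smul _ (v j)]
    _ = ∑ p ∈ rxx.index, antipode (R := k) (f (rxx.left p ⊗ₜ y)) ⊗ₜ[k] rxx.right p := by
        rw [Finset.sum_comm]
        refine Finset.sum_congr rfl fun p _ => ?_
        rw [← TensorProduct.sum_tmul, ← T2_tmul (rxx.left p) y ry,
          ← antipode_comp_f h, LinearMap.comp_apply]
    _ = ∑ i ∈ rx.index, antipode (R := k) (f (rx.left i ⊗ₜ y)) ⊗ₜ[k] rx.right i := by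
        have := repr_sum_eq (TensorProduct.map
          (antipode (R := k) ∘ₗ f ∘ₗ (TensorProduct.mk k H H).flip y) LinearMap.id) x rxx rx
        simpa using this


/-- `r(S(x₁) ⊗ (x₂ ⇀ y)) = y₁ ⊗ S(x ↼ y₂)` and
`r((x ↼ y₁) ⊗ S(y₂)) = S(x₁ ⇀ y) ⊗ x₂`. -/
theorem stmt8 (f g : H ⊗[k] H →ₗ[k] H) (h : IsMatchedPairOfActions k H f g)
    (x y : H) (rx : CoalgRepr k x) (ry : CoalgRepr k y) :
    (∑ i ∈ rx.index,
        braidOp k H f g (antipode (R := k) (rx.left i) ⊗ₜ[k] f (rx.right i ⊗ₜ y))) =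
      (∑ j ∈ ry.index, ry.left j ⊗ₜ[k] antipode (R := k) (g (x ⊗ₜ ry.right j))) ∧
    (∑ j ∈ ry.index,
        braidOp k H f g (g (x ⊗ₜ ry.left j) ⊗ₜ[k] antipode (R := k) (ry.right j))) =
      ∑ i ∈ rx.index, antipode (R := k) (f (rx.left i ⊗ₜ y)) ⊗ₜ[k] rx.right i := by
  exact ⟨part1 h x y rx ry, part2 h x y rx ry⟩

end
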